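/- arXiv:1810.05255 — 6 statements merged into one kernel-verified Lean document; each statement's English description precedes it below -/
import Mathlib

section
/- Let R₀ ⊆ R be integral domains with the same field of fractions K, and let x ∈ R₀ be a nonzero element. Then R₀ = R ∩ R₀[1/x] (intersection taken inside K) if and only if the natural map R₀/xR₀ → R/xR is injective. -/
/-!
Both conditions say that `R₀ ∩ xR = xR₀`, i.e. that `y ∈ R` and `xy ∈ R₀` force `y ∈ R₀`.
For the localization side, an element `y ∈ R` with `y xⁿ ∈ R₀` is brought into `R₀` by removing
the factors of `x` one at a time; for the quotient side, injectivity of `R₀/xR₀ → R/xR` says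
exactly that an element of `R₀` divisible by `x` in `R` is divisible by `x` in `R₀`.
-/

namespace Ideal

theorem quotientMap_injective_iff {R S : Type*} [Ring R] [Ring S] {J : Ideal R} {I : Ideal S}
    [I.IsTwoSided] [J.IsTwoSided] {f : R →+* S} {H : J ≤ I.comap f} :
    Function.Injective (quotientMap I f H) ↔ I.comap f ≤ J := by
  refine ⟨fun hinj a ha => ?_, quotientMap_injective'⟩
  rwa [← Quotient.eq_zero_iff_mem, ← map_eq_zero_iff _ hinj, quotientMap_mk,
    Quotient.eq_zero_iff_mem]

end Ideal

namespace Subring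

variable {K : Type*} [Field K] {R₀ R : Subring K}

theorem mem_of_mul_pow_mem {x : K} (hxR : x ∈ R) (hdiv : ∀ y ∈ R, x * y ∈ R₀ → y ∈ R₀)
    {y : K} (hy : y ∈ R) (n : ℕ) (hyx : y * x ^ n ∈ R₀) : y ∈ R₀ := by
  induction n with
  | zero => simpa using hyx
  | succ n ih =>
    have hyxn : y * x ^ n ∈ R := mul_mem hy (pow_mem hxR n)
    have hrw : x * (y * x ^ n) = y * x ^ (n + 1) := by ring
    exact ih (hdiv _ hyxn (hrw ▸ hyx))

theorem coe_eq_inter_localization_iff (hsub : R₀ ≤ R) {x : K} (hxR₀ : x ∈ R₀) :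
    ((R₀ : Set K) = (R : Set K) ∩ {y : K | ∃ (r : R₀) (n : ℕ), y * x ^ n = (r : K)}) ↔
      ∀ y ∈ R, x * y ∈ R₀ → y ∈ R₀ := by
  refine ⟨fun heq y hy hxy => ?_, fun hdiv => ?_⟩
  · have hy' : y ∈ (R : Set K) ∩ {y : K | ∃ (r : R₀) (n : ℕ), y * x ^ n = (r : K)} :=
      ⟨hy, ⟨_, hxy⟩, 1, by rw [pow_one, mul_comm]⟩
    rw [← heq] at hy'
    exact hy'
  · refine Set.Subset.antisymm (fun y hy => ⟨hsub hy, ⟨y, hy⟩, 0, by simp⟩) ?_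
    rintro y ⟨hy, r, n, hr⟩
    exact mem_of_mul_pow_mem (hsub hxR₀) hdiv hy n (hr ▸ r.2)

theorem comap_span_singleton_inclusion_le_iff (hsub : R₀ ≤ R) {x : R₀} (hx : x ≠ 0) :
    (Ideal.span {inclusion hsub x}).comap (inclusion hsub) ≤ Ideal.span {x} ↔
      ∀ y ∈ R, (x : K) * y ∈ R₀ → y ∈ R₀ := by
  refine ⟨fun hle y hy hxy => ?_, fun hdiv a ha => ?_⟩
  · have hmem : (⟨_, hxy⟩ : R₀) ∈ (Ideal.span {inclusion hsub x}).comap (inclusion hsub) :=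
      Ideal.mem_span_singleton.2 ⟨⟨y, hy⟩, rfl⟩
    obtain ⟨s, hs⟩ := Ideal.mem_span_singleton.1 (hle hmem)
    have hys : y = s := mul_left_cancel₀ (by exact_mod_cast hx) (congrArg Subtype.val hs)
    exact hys ▸ s.2
  · obtain ⟨z, hz⟩ := Ideal.mem_span_singleton.1 (Ideal.mem_comap.1 ha)
    have haz : (a : K) = x * z := congrArg Subtype.val hz
    exact Ideal.mem_span_singleton.2 ⟨⟨z, hdiv z z.2 (haz ▸ a.2)⟩, Subtype.ext haz⟩

end Subring

/-- Let `R₀ ⊆ R` be integral domains with the same field of fractions `K`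
(realized as subrings of `K`, each having every element of `K` as a ratio of its elements),
and let `x ∈ R₀` be nonzero. Then `R₀ = R ∩ R₀[1/x]` inside `K` if and only if the natural
map `R₀/xR₀ → R/xR` is injective. -/
theorem stmt_1 {K : Type*} [Field K] (R₀ R : Subring K) (hsub : R₀ ≤ R)
    (x : R₀) (hx : x ≠ 0) :
    ((R₀ : Set K) = (R : Set K) ∩ {y : K | ∃ (r : R₀) (n : ℕ), y * (x : K) ^ n = (r : K)})
    ↔ Function.Injective
        (Ideal.quotientMap (Ideal.span {Subring.inclusion hsub x}) (Subring.inclusion hsub)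
          (by
            rw [Ideal.span_le, Set.singleton_subset_iff]
            exact Ideal.mem_comap.mpr (Ideal.subset_span rfl))) := by
  rw [Subring.coe_eq_inter_localization_iff hsub x.2, Ideal.quotientMap_injective_iff,
    Subring.comap_span_singleton_inclusion_le_iff hsub hx]
end

section
/- Let K be a field of characteristic p > 0, let K_t be an algebraic closure of the Laurent series field K((t)), with the t-adic valuation v_t extended (uniquely) to a Q-valued valuation on K_t. For a ∈ K with a ≠ 0, the polynomial X - tX^p - a ∈ K((t))[X] has p distinct roots in K_t; exactly p−1 of these roots have valuation −1/(p−1), and exactly one root has valuation 0. -/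
/-!
In characteristic `p` the derivative of `X - t X ^ p - a` is `1`, so the polynomial is separable of
degree `p` and has `p` distinct roots. For a root `z` the vanishing sum `z + (-t z ^ p) + (-a)` has
terms of valuations `v z`, `1 + p v z` and `0`, so the least of them is attained twice: `v z` is
`0` or `-1/(p-1)`, the two slopes of the Newton polygon. The product of the roots is `± a / t`,
so their valuations add up to `-1`, which leaves exactly `p - 1` roots of the negative valuation.
-/

section Valuation

variable {F : Type*} [Field F] {v : F → ℚ}

theorem val_one (hv_mul : ∀ x y : F, x ≠ 0 → y ≠ 0 → v (x * y) = v x + v y) : v 1 = 0 := by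
  have := hv_mul 1 1 one_ne_zero one_ne_zero
  rw [one_mul] at this
  linarith

theorem val_neg_one (hv_mul : ∀ x y : F, x ≠ 0 → y ≠ 0 → v (x * y) = v x + v y) :
    v (-1) = 0 := by
  have := hv_mul (-1) (-1) (neg_ne_zero.2 one_ne_zero) (neg_ne_zero.2 one_ne_zero)
  rw [neg_one_mul, neg_neg, val_one hv_mul] at this
  linarith

theorem val_neg (hv_mul : ∀ x y : F, x ≠ 0 → y ≠ 0 → v (x * y) = v x + v y) {x : F}
    (hx : x ≠ 0) : v (-x) = v x := by
  rw [← neg_one_mul, hv_mul _ _ (neg_ne_zero.2 one_ne_zero) hx, val_neg_one hv_mul, zero_add]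

theorem val_pow (hv_mul : ∀ x y : F, x ≠ 0 → y ≠ 0 → v (x * y) = v x + v y) {x : F}
    (hx : x ≠ 0) (n : ℕ) : v (x ^ n) = n * v x := by
  induction n with
  | zero => simp [val_one hv_mul]
  | succ n ih =>
    rw [pow_succ, hv_mul _ _ (pow_ne_zero n hx) hx, ih]
    push_cast
    ring

theorem val_multiset_prod (hv_mul : ∀ x y : F, x ≠ 0 → y ≠ 0 → v (x * y) = v x + v y)
    {s : Multiset F} (hs : ∀ x ∈ s, x ≠ 0) : v s.prod = (s.map v).sum := by
  induction s using Multiset.induction with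
  | empty => simp [val_one hv_mul]
  | cons x s ih =>
    have hs' : ∀ y ∈ s, y ≠ 0 := fun y hy => hs y (Multiset.mem_cons_of_mem hy)
    rw [Multiset.prod_cons, hv_mul _ _ (hs x (Multiset.mem_cons_self x s))
      (Multiset.prod_ne_zero fun h => hs' 0 h rfl), Multiset.map_cons, Multiset.sum_cons, ih hs']

theorem min_val_le_of_add_add_eq_zero
    (hv_mul : ∀ x y : F, x ≠ 0 → y ≠ 0 → v (x * y) = v x + v y)
    (hv_add : ∀ x y : F, x ≠ 0 → y ≠ 0 → x + y ≠ 0 → min (v x) (v y) ≤ v (x + y))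
    {x y w : F} (hx : x ≠ 0) (hy : y ≠ 0) (hw : w ≠ 0) (h : x + y + w = 0) :
    min (v y) (v w) ≤ v x := by
  have hyw : y + w = -x := by linear_combination h
  rw [← val_neg hv_mul hx, ← hyw]
  exact hv_add y w hy hw (hyw ▸ neg_ne_zero.2 hx)

theorem sum_val_roots (hv_mul : ∀ x y : F, x ≠ 0 → y ≠ 0 → v (x * y) = v x + v y)
    {P : Polynomial F} (hP : P.Splits) (h0 : P.coeff 0 ≠ 0) :
    (P.roots.map v).sum = v (P.coeff 0) - v P.leadingCoeff := by
  have hcoeff := hP.coeff_zero_eq_leadingCoeff_mul_prod_roots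
  rw [hcoeff] at h0 ⊢
  obtain ⟨⟨hsign, hlead⟩, hprod⟩ := mul_ne_zero_iff.1 h0 |>.imp_left mul_ne_zero_iff.1
  have hroots : ∀ z ∈ P.roots, z ≠ 0 := fun z hz h => hprod (Multiset.prod_eq_zero (h ▸ hz))
  rw [hv_mul _ _ (mul_ne_zero hsign hlead) hprod, hv_mul _ _ hsign hlead,
    val_pow hv_mul (neg_ne_zero.2 one_ne_zero), val_neg_one hv_mul, val_multiset_prod hv_mul hroots]
  ring

end Valuation

theorem eq_zero_or_eq_neg_inv_of_min_le {p u : ℚ} (hp : 1 < p) (h₁ : min (1 + p * u) 0 ≤ u)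
    (h₂ : min u 0 ≤ 1 + p * u) (h₃ : min u (1 + p * u) ≤ 0) :
    u = 0 ∨ u = -(1 / (p - 1)) := by
  rcases lt_trichotomy u 0 with hu | hu | hu
  · right
    have : u = 1 + p * u := by
      simp only [min_le_iff] at h₁ h₂ h₃
      rcases h₁ with h₁ | h₁ <;> rcases h₂ with h₂ | h₂ <;> nlinarith
    have hp1 : p - 1 ≠ 0 := by linarith
    field_simp
    linarith
  · exact Or.inl hu
  · exfalso
    simp only [min_le_iff] at h₃
    rcases h₃ with h₃ | h₃ <;> nlinarith

theorem card_filter_mul_eq_sum {α : Type*} {s : Finset α} {f : α → ℚ} {c : ℚ}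
    (hf : ∀ x ∈ s, f x = 0 ∨ f x = c) : (s.filter (f · = c)).card * c = ∑ x ∈ s, f x := by
  rw [← Finset.sum_filter_of_ne (p := (f · = c)) fun x hx hx0 => (hf x hx).resolve_left hx0,
    Finset.sum_congr rfl fun x hx => (Finset.mem_filter.1 hx).2, Finset.sum_const, nsmul_eq_mul]

section XSubCMulXPowSubC

open Polynomial

variable {F : Type*} [Field F] {p : ℕ} {t a : F}

theorem natDegree_X_sub_C_mul_X_pow_sub_C (hp : 1 < p) (ht : t ≠ 0) :
    (X - C t * X ^ p - C a).natDegree = p := by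
  rw [natDegree_sub_C, natDegree_sub_eq_right_of_natDegree_lt] <;>
    rw [natDegree_C_mul_X_pow p t ht]
  rwa [natDegree_X]

theorem leadingCoeff_X_sub_C_mul_X_pow_sub_C (hp : 1 < p) (ht : t ≠ 0) :
    (X - C t * X ^ p - C a).leadingCoeff = -t := by
  rw [leadingCoeff, natDegree_X_sub_C_mul_X_pow_sub_C hp ht]
  simp [coeff_X, coeff_C, (zero_lt_one.trans hp).ne', hp.ne]

theorem coeff_zero_X_sub_C_mul_X_pow_sub_C (hp : p ≠ 0) :
    (X - C t * X ^ p - C a).coeff 0 = -a := by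
  simp [coeff_X, coeff_C, coeff_X_pow, hp.symm]

theorem separable_X_sub_C_mul_X_pow_sub_C [CharP F p] : (X - C t * X ^ p - C a).Separable := by
  have hderiv : derivative (X - C t * X ^ p - C a) = 1 := by
    simp [derivative_X_pow, CharP.cast_eq_zero]
  rw [Separable, hderiv]
  exact isCoprime_one_right

theorem val_eq_zero_or_eq_neg_inv_of_isRoot {v : F → ℚ}
    (hv_mul : ∀ x y : F, x ≠ 0 → y ≠ 0 → v (x * y) = v x + v y)
    (hv_add : ∀ x y : F, x ≠ 0 → y ≠ 0 → x + y ≠ 0 → min (v x) (v y) ≤ v (x + y))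
    (hp : 1 < p) {z : F} (ht : t ≠ 0) (ha : a ≠ 0) (hvt : v t = 1) (hva : v a = 0)
    (hz : (X - C t * X ^ p - C a).IsRoot z) : v z = 0 ∨ v z = -(1 / ((p : ℚ) - 1)) := by
  replace hz : z - t * z ^ p - a = 0 := by simpa using hz
  have hz0 : z ≠ 0 := by
    rintro rfl
    simp [zero_pow (zero_lt_one.trans hp).ne', ha] at hz
  have htz : -(t * z ^ p) ≠ 0 := neg_ne_zero.2 (mul_ne_zero ht (pow_ne_zero p hz0))
  have hvtz : v (-(t * z ^ p)) = 1 + p * v z := by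
    rw [val_neg hv_mul (mul_ne_zero ht (pow_ne_zero p hz0)), hv_mul _ _ ht (pow_ne_zero p hz0),
      hvt, val_pow hv_mul hz0]
  have hva' : v (-a) = 0 := by rw [val_neg hv_mul ha, hva]
  have h₁ := min_val_le_of_add_add_eq_zero hv_mul hv_add hz0 htz (neg_ne_zero.2 ha)
    (by linear_combination hz)
  have h₂ := min_val_le_of_add_add_eq_zero hv_mul hv_add htz hz0 (neg_ne_zero.2 ha)
    (by linear_combination hz)
  have h₃ := min_val_le_of_add_add_eq_zero hv_mul hv_add (neg_ne_zero.2 ha) hz0 htz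
    (by linear_combination hz)
  rw [hvtz, hva'] at h₁ h₂ h₃
  exact eq_zero_or_eq_neg_inv_of_min_le (by exact_mod_cast hp) h₁ h₂ h₃

end XSubCMulXPowSubC

theorem card_filter_of_sum_eq_neg_one {α : Type*} {s : Finset α} {f : α → ℚ} {n : ℕ}
    (hn : 1 < n) (hs : s.card = n) (hf : ∀ x ∈ s, f x = 0 ∨ f x = -(1 / ((n : ℚ) - 1)))
    (hsum : ∑ x ∈ s, f x = -1) :
    (s.filter (f · = -(1 / ((n : ℚ) - 1)))).card = n - 1 ∧ (s.filter (f · = 0)).card = 1 := by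
  set c : ℚ := -(1 / ((n : ℚ) - 1)) with hc_def
  have hn' : (n : ℚ) - 1 ≠ 0 := sub_ne_zero.2 (by exact_mod_cast hn.ne')
  have hc : c * ((n : ℚ) - 1) = -1 := by rw [hc_def]; field_simp
  have hc0 : c ≠ 0 := neg_ne_zero.2 (one_div_ne_zero hn')
  have hcard := card_filter_mul_eq_sum hf
  rw [hsum] at hcard
  have hneg : (s.filter (f · = c)).card = n - 1 := by
    have : ((s.filter (f · = c)).card : ℚ) = (n - 1 : ℕ) := by
      rw [Nat.cast_sub hn.le, Nat.cast_one]
      linear_combination (1 - (n : ℚ)) * hcard + ((s.filter (f · = c)).card : ℚ) * hc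
    exact_mod_cast this
  have hzero : s.filter (f · = 0) = s.filter (¬ f · = c) :=
    Finset.filter_congr fun x hx =>
      ⟨fun h h' => hc0 (h' ▸ h), fun h => (hf x hx).resolve_right h⟩
  have hsplit := Finset.card_filter_add_card_filter_not (s := s) (f · = c)
  rw [← hzero] at hsplit
  exact ⟨hneg, by omega⟩

theorem stmt_2_general (p : ℕ) [Fact p.Prime] {K : Type*} [Field K] [CharP K p]
    {Kt : Type*} [Field Kt] [DecidableEq Kt] [Algebra (LaurentSeries K) Kt]
    [IsAlgClosed Kt]
    (v : Kt → ℚ)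
    (hv_mul : ∀ x y : Kt, x ≠ 0 → y ≠ 0 → v (x * y) = v x + v y)
    (hv_add : ∀ x y : Kt, x ≠ 0 → y ≠ 0 → x + y ≠ 0 → min (v x) (v y) ≤ v (x + y))
    (hv_ext : ∀ f : LaurentSeries K, f ≠ 0 →
      v (algebraMap (LaurentSeries K) Kt f) = (f.order : ℚ))
    (a : K) (ha : a ≠ 0) :
    let P : Polynomial Kt :=
      Polynomial.X
        - Polynomial.C (algebraMap (LaurentSeries K) Kt (HahnSeries.single 1 1))
            * Polynomial.X ^ p
        - Polynomial.C (algebraMap (LaurentSeries K) Kt (HahnSeries.C a))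
    Multiset.card P.roots = p ∧ P.roots.Nodup ∧
    (P.roots.toFinset.filter fun z => v z = -(1 / ((p : ℚ) - 1))).card = p - 1 ∧
    (P.roots.toFinset.filter fun z => v z = 0).card = 1 := by
  intro P
  have hp : 1 < p := (Fact.out : p.Prime).one_lt
  have hsingle : HahnSeries.single (1 : ℤ) (1 : K) ≠ 0 := HahnSeries.single_ne_zero one_ne_zero
  have hCa : (HahnSeries.C a : LaurentSeries K) ≠ 0 := HahnSeries.C_ne_zero ha
  set t : Kt := algebraMap (LaurentSeries K) Kt (HahnSeries.single 1 1)
  set a' : Kt := algebraMap (LaurentSeries K) Kt (HahnSeries.C a)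
  have ht : t ≠ 0 := (map_ne_zero _).2 hsingle
  have ha' : a' ≠ 0 := (map_ne_zero _).2 hCa
  have hvt : v t = 1 := by rw [hv_ext _ hsingle, HahnSeries.order_single one_ne_zero]; rfl
  have hva : v a' = 0 := by rw [hv_ext _ hCa, HahnSeries.order_C]; rfl
  have : CharP (LaurentSeries K) p := charP_of_injective_ringHom HahnSeries.C_injective p
  have : CharP Kt p := charP_of_injective_algebraMap (algebraMap (LaurentSeries K) Kt).injective p
  have hnodup : P.roots.Nodup := Polynomial.nodup_roots separable_X_sub_C_mul_X_pow_sub_C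
  have hcard : Multiset.card P.roots = p := by
    rw [IsAlgClosed.card_roots_eq_natDegree, natDegree_X_sub_C_mul_X_pow_sub_C hp ht]
  have hval : ∀ z ∈ P.roots.toFinset, v z = 0 ∨ v z = -(1 / ((p : ℚ) - 1)) := fun z hz =>
    val_eq_zero_or_eq_neg_inv_of_isRoot hv_mul hv_add hp ht ha' hvt hva
      (Polynomial.isRoot_of_mem_roots (Multiset.mem_toFinset.1 hz))
  have hsum : ∑ z ∈ P.roots.toFinset, v z = -1 := by
    have hcoeff : P.coeff 0 = -a' := coeff_zero_X_sub_C_mul_X_pow_sub_C (zero_lt_one.trans hp).ne'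
    rw [Finset.sum_eq_multiset_sum, Multiset.toFinset_val, hnodup.dedup,
      sum_val_roots hv_mul (IsAlgClosed.splits P) (hcoeff ▸ neg_ne_zero.2 ha'), hcoeff,
      leadingCoeff_X_sub_C_mul_X_pow_sub_C hp ht, val_neg hv_mul ha', val_neg hv_mul ht, hva, hvt]
    norm_num
  exact ⟨hcard, hnodup, card_filter_of_sum_eq_neg_one hp
    (by rw [Multiset.toFinset_card_of_nodup hnodup, hcard]) hval hsum⟩

/-- Let `K` be a field of characteristic `p`, `K_t` an algebraic closure of the
Laurent series field `K((t))`, and `v : K_t → ℚ` the (additive, normalized by `v(t)=1`)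
extension of the `t`-adic valuation: `v` is multiplicative, satisfies the ultrametric
inequality, and restricts on `K((t))` to the order-of-vanishing valuation. Then for
`a ∈ K`, `a ≠ 0`, the polynomial `X − tX^p − a` has `p` distinct roots in `K_t`;
exactly `p − 1` of them have valuation `−1/(p−1)` and exactly one has valuation `0`. -/
theorem stmt_2 (p : ℕ) [Fact p.Prime] {K : Type*} [Field K] [CharP K p]
    {Kt : Type*} [Field Kt] [DecidableEq Kt] [Algebra (LaurentSeries K) Kt]
    [IsAlgClosed Kt] [Algebra.IsAlgebraic (LaurentSeries K) Kt]
    (v : Kt → ℚ)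
    (hv_mul : ∀ x y : Kt, x ≠ 0 → y ≠ 0 → v (x * y) = v x + v y)
    (hv_add : ∀ x y : Kt, x ≠ 0 → y ≠ 0 → x + y ≠ 0 → min (v x) (v y) ≤ v (x + y))
    (hv_ext : ∀ f : LaurentSeries K, f ≠ 0 →
      v (algebraMap (LaurentSeries K) Kt f) = (f.order : ℚ))
    (a : K) (ha : a ≠ 0) :
    let P : Polynomial Kt :=
      Polynomial.X
        - Polynomial.C (algebraMap (LaurentSeries K) Kt (HahnSeries.single 1 1))
            * Polynomial.X ^ p
        - Polynomial.C (algebraMap (LaurentSeries K) Kt (HahnSeries.C a))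
    Multiset.card P.roots = p ∧ P.roots.Nodup ∧
    (P.roots.toFinset.filter fun z => v z = -(1 / ((p : ℚ) - 1))).card = p - 1 ∧
    (P.roots.toFinset.filter fun z => v z = 0).card = 1 :=
  stmt_2_general p v hv_mul hv_add hv_ext a ha
end

section
/- In Z^n with the standard basis, let η_ω = −(p−1,...,p−1) and for 1 ≤ i ≤ n−1 let S_i = (1,...,1,0,...,0) − (0,...,0,p,...,p) where 1 and p each appear i times. Then the cone {λ ∈ Z^n : p·(a_n,...,a_1) + (a_1,...,a_n) has all coordinates forming an antidominant symplectic weight} (equivalently the saturated Schubert cone for Sp(2n)) is the saturation of the monoid generated by η_ω and S_1, ..., S_{n−1}: i.e., λ is in this cone if and only if some positive integer multiple mλ is a nonnegative integer combination of η_ω, S_1, ..., S_{n−1}. -/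
/-!
Let `w₀` be the coordinate reversal. The map `twist p : λ ↦ p • λ + w₀ λ` is injective for
`p² ≠ 1`, because `p • twist λ - w₀ (twist λ) = (p² - 1) • λ`. It sends `S_i` (and
`η_ω = S_n`) to `-(p² - 1)` times the indicator of the final segment `[n - i, n)`, and the
inequalities defining the cone say exactly that `b = twist λ` is antitone and nonpositive.
Then `-b` is the nonnegative combination of final-segment indicators whose coefficients are the
consecutive differences of `b`; so `(p² - 1) • b` is the twist of an element of the monoid, and
by injectivity that element is `(p² - 1) • λ`.
-/

open Finset

section

variable {n : ℕ}

def twist (p : ℤ) (lam : Fin n → ℤ) : Fin n → ℤ := fun k => p * lam k + lam k.rev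

def spGen (p : ℤ) (n i : ℕ) (k : Fin n) : ℤ :=
  (if (k : ℕ) < i then 1 else 0) - (if n - i ≤ (k : ℕ) then p else 0)

def spComb (p : ℤ) (c : ℕ → ℕ) (k : Fin n) : ℤ :=
  (c 0 : ℤ) * (-(p - 1)) + ∑ i ∈ Ico 1 n, (c i : ℤ) * spGen p n i k

def tailSum (n : ℕ) (c : ℕ → ℕ) (k : ℕ) : ℤ :=
  (c 0 : ℤ) + ∑ i ∈ Ico 1 n, if n - i ≤ k then (c i : ℤ) else 0

section Twist

variable (p : ℤ)

lemma twist_smul (m : ℤ) (lam : Fin n → ℤ) : twist p (m • lam) = m • twist p lam := by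
  ext k
  simp only [twist, Pi.smul_apply, smul_eq_mul]
  ring

lemma mul_twist_sub_twist_rev (lam : Fin n → ℤ) (k : Fin n) :
    p * twist p lam k - twist p lam k.rev = (p ^ 2 - 1) * lam k := by
  simp only [twist, Fin.rev_rev]
  ring

lemma twist_injective (hp : p ^ 2 ≠ 1) : Function.Injective (twist (n := n) p) := by
  intro lam mu h
  ext k
  have hk := mul_twist_sub_twist_rev p lam k
  rw [h, mul_twist_sub_twist_rev] at hk
  exact (mul_left_cancel₀ (sub_ne_zero.mpr hp) hk).symm

lemma twist_spGen {i : ℕ} (hi : i ≤ n) (k : Fin n) :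
    twist p (spGen p n i) k = -(p ^ 2 - 1) * if n - i ≤ (k : ℕ) then 1 else 0 := by
  have hk := k.isLt
  simp only [twist, spGen, Fin.val_rev]
  simp only [show n - (k + 1) < i ↔ n - i ≤ k by omega, show n - i ≤ n - (k + 1) ↔ k < i by omega]
  split_ifs <;> ring

lemma twist_spComb (c : ℕ → ℕ) (k : Fin n) :
    twist p (spComb p c) k = -(p ^ 2 - 1) * tailSum n c k := by
  have hgen : ∀ i ∈ Ico 1 n, (c i : ℤ) * twist p (spGen p n i) k
      = -(p ^ 2 - 1) * if n - i ≤ (k : ℕ) then (c i : ℤ) else 0 := fun i hi => by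
    rw [twist_spGen p (mem_Ico.mp hi).2.le]
    split_ifs <;> ring
  calc twist p (spComb p c) k
      = (c 0 : ℤ) * (-(p ^ 2 - 1)) + ∑ i ∈ Ico 1 n, (c i : ℤ) * twist p (spGen p n i) k := by
        simp only [twist, spComb, sum_add_distrib, mul_add, mul_sum]
        ring_nf
    _ = -(p ^ 2 - 1) * tailSum n c k := by
        rw [sum_congr rfl hgen, ← mul_sum, tailSum]
        ring

end Twist

section TailSum

variable (c : ℕ → ℕ)

lemma tailSum_nonneg (k : ℕ) : 0 ≤ tailSum n c k :=
  add_nonneg (Int.natCast_nonneg _) (sum_nonneg fun i _ => by split_ifs <;> positivity)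

lemma tailSum_mono : Monotone (tailSum n c) := fun j k hjk => by
  unfold tailSum
  gcongr with i
  split_ifs <;> omega

lemma tailSum_zero : tailSum n c 0 = c 0 := by
  rw [tailSum, sum_eq_zero fun i hi => if_neg (by have := (mem_Ico.mp hi).2; omega), add_zero]

lemma tailSum_succ {k : ℕ} (hk : k + 1 < n) :
    tailSum n c (k + 1) = tailSum n c k + c (n - 1 - k) := by
  have hsplit : ∀ i ∈ Ico 1 n, (if n - i ≤ k + 1 then (c i : ℤ) else 0)
      = (if n - i ≤ k then (c i : ℤ) else 0) + if n - 1 - k = i then (c i : ℤ) else 0 :=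
    fun i hi => by have := (mem_Ico.mp hi).2; split_ifs <;> omega
  rw [tailSum, tailSum, sum_congr rfl hsplit, sum_add_distrib, sum_ite_eq,
    if_pos (mem_Ico.mpr ⟨by omega, by omega⟩), add_assoc]

lemma exists_tailSum_eq_neg (f : ℕ → ℤ) (hf : ∀ j, j + 1 < n → f (j + 1) ≤ f j)
    (h0 : f 0 ≤ 0) : ∃ c : ℕ → ℕ, ∀ k < n, tailSum n c k = -f k := by
  refine ⟨fun i => if i = 0 then (-f 0).toNat else (f (n - 1 - i) - f (n - i)).toNat,
    fun k hk => ?_⟩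
  induction k with
  | zero => rw [tailSum_zero, if_pos rfl, Int.toNat_of_nonneg (by omega)]
  | succ k ih =>
    have hidx : n - (n - 1 - k) = k + 1 := by omega
    rw [tailSum_succ _ hk, ih (by omega), if_neg (by omega), hidx, Nat.sub_sub_self (by omega),
      Int.toNat_of_nonneg (sub_nonneg.mpr (hf k hk))]
    ring

end TailSum

section Cone

variable {p : ℤ} {lam : Fin n → ℤ}

lemma twist_antitone_and_nonpos_of_mul_eq_spComb (hp : 1 ≤ p) {m : ℤ} (hm : 0 < m) {c : ℕ → ℕ}
    (h : ∀ k, m * lam k = spComb p c k) :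
    (∀ j k : Fin n, (j : ℕ) ≤ k → twist p lam k ≤ twist p lam j) ∧ ∀ k, twist p lam k ≤ 0 := by
  have hD : 0 ≤ p ^ 2 - 1 := by nlinarith
  have key : ∀ k, m * twist p lam k = -(p ^ 2 - 1) * tailSum n c k := fun k => by
    rw [← twist_spComb, ← funext h]
    exact congrFun (twist_smul p m lam).symm k
  refine ⟨fun j k hjk => le_of_mul_le_mul_left ?_ hm, fun k => nonpos_of_mul_nonpos_right ?_ hm⟩
  · rw [key, key]
    exact mul_le_mul_of_nonpos_left (tailSum_mono c hjk) (by linarith)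
  · rw [key]
    exact mul_nonpos_of_nonpos_of_nonneg (by linarith) (tailSum_nonneg c k)

lemma exists_mul_eq_spComb (hp : 1 < p) (hn : 0 < n)
    (hstep : ∀ j k : Fin n, (j : ℕ) + 1 = k → twist p lam k ≤ twist p lam j)
    (h0 : twist p lam ⟨0, hn⟩ ≤ 0) :
    ∃ c : ℕ → ℕ, ∀ k, (p ^ 2 - 1) * lam k = spComb p c k := by
  obtain ⟨c, hc⟩ := exists_tailSum_eq_neg (n := n)
    (fun j => if h : j < n then twist p lam ⟨j, h⟩ else 0)
    (fun j hj => by simpa only [dif_pos hj, dif_pos (Nat.lt_of_succ_lt hj)] using hstep _ _ rfl)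
    (by simpa only [dif_pos hn] using h0)
  have htwist : twist p ((p ^ 2 - 1) • lam) = twist p (spComb p c) := by
    ext k
    rw [twist_smul, twist_spComb, hc k k.isLt, dif_pos k.isLt]
    simp only [Pi.smul_apply, smul_eq_mul]
    ring
  exact ⟨c, congrFun (twist_injective p (by nlinarith) htwist)⟩

end Cone

end

/-- In `ℤⁿ` (with `lam : Fin n → ℤ` 0-indexed), the saturated Schubert cone for
`Sp(2n)` — cut out by `(p·a_{i+1} + a_{n−i}) − (p·a_i + a_{n+1−i}) ≤ 0` for `i = 1,…,n−1`
and `p·a₁ + a_n ≤ 0` — is the saturation of the monoid generated by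
`η_ω = −(p−1,…,p−1)` and `S_i = (1,…,1,0,…,0) − (0,…,0,p,…,p)` (`1` and `p` appearing
`i` times each), `i = 1,…,n−1`. -/
theorem stmt_9 (p n : ℕ) [Fact p.Prime] (hn : 0 < n) (lam : Fin n → ℤ) :
    ((∀ j k : Fin n, (j : ℕ) + 1 = (k : ℕ) →
        ((p : ℤ) * lam k + lam (Fin.rev k)) - ((p : ℤ) * lam j + lam (Fin.rev j)) ≤ 0) ∧
      (p : ℤ) * lam ⟨0, hn⟩ + lam (Fin.rev ⟨0, hn⟩) ≤ 0)
    ↔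
    (∃ m : ℕ, 0 < m ∧ ∃ c : ℕ → ℕ,
      ∀ k : Fin n,
        (m : ℤ) * lam k =
          (c 0 : ℤ) * (-((p : ℤ) - 1)) +
          ∑ i ∈ Finset.Ico 1 n, (c i : ℤ) *
            ((if (k : ℕ) < i then (1 : ℤ) else 0) -
             (if n - i ≤ (k : ℕ) then (p : ℤ) else 0))) := by
  have hp : 2 ≤ p := (Fact.out : p.Prime).two_le
  constructor
  · rintro ⟨hstep, h0⟩
    obtain ⟨c, hc⟩ := exists_mul_eq_spComb (p := p) (by omega) hn
      (fun j k hjk => sub_nonpos.mp (hstep j k hjk)) h0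
    have hsq : 1 < p ^ 2 := by nlinarith
    refine ⟨p ^ 2 - 1, by omega, c, fun k => ?_⟩
    rw [Nat.cast_sub hsq.le, Nat.cast_pow, Nat.cast_one]
    exact hc k
  · rintro ⟨m, hm, c, hc⟩
    obtain ⟨hanti, hnonpos⟩ :=
      twist_antitone_and_nonpos_of_mul_eq_spComb (p := p) (by omega) (by omega) hc
    exact ⟨fun j k hjk => sub_nonpos.mpr (hanti j k (by omega)), hnonpos _⟩
end

section
/- For G = Sp(4) (n = 2), the saturated zip cone, which equals the saturation of the monoid N·(1,−p) + N·(1−p,1−p) + N·(0,−p(p−1)) inside Z², is exactly the set of pairs (a_1, a_2) ∈ Z² satisfying a_1 ≥ a_2 and p·a_1 + a_2 ≤ 0. -/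
/-!
Both inequalities are cut out by linear forms, `a₁ - a₂` and `-(p a₁ + a₂)`, that are nonnegative
on the three generators once `p ≥ 1`; they are then nonnegative on the monoid and, after
dividing by `m > 0`, on its saturation. Conversely the first two generators span a sublattice of
index `p² - 1`, and solving in this basis gives
`(p² - 1) • a = (p - 1)(a₁ - a₂) • (1, -p) + (-(p a₁ + a₂)) • (1 - p, 1 - p)`,
whose coefficients are nonnegative exactly on the claimed cone.
-/

def zipConeComb (p c₁ c₂ c₃ : ℤ) : ℤ × ℤ :=
  c₁ • (1, -p) + c₂ • (1 - p, 1 - p) + c₃ • (0, -(p * (p - 1)))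

section
variable {p c₁ c₂ c₃ : ℤ}

lemma zipConeComb_fst_sub_snd :
    (zipConeComb p c₁ c₂ c₃).1 - (zipConeComb p c₁ c₂ c₃).2
      = c₁ * (p + 1) + c₃ * (p * (p - 1)) := by
  simp only [zipConeComb, Prod.fst_add, Prod.snd_add, Prod.smul_mk, smul_eq_mul]
  ring

lemma zipConeComb_mul_fst_add_snd :
    p * (zipConeComb p c₁ c₂ c₃).1 + (zipConeComb p c₁ c₂ c₃).2
      = -(c₂ * ((p - 1) * (p + 1)) + c₃ * (p * (p - 1))) := by
  simp only [zipConeComb, Prod.fst_add, Prod.snd_add, Prod.smul_mk, smul_eq_mul]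
  ring

lemma zipConeComb_mem_cone (hp : 1 ≤ p) (h₁ : 0 ≤ c₁) (h₂ : 0 ≤ c₂) (h₃ : 0 ≤ c₃) :
    (zipConeComb p c₁ c₂ c₃).2 ≤ (zipConeComb p c₁ c₂ c₃).1 ∧
      p * (zipConeComb p c₁ c₂ c₃).1 + (zipConeComb p c₁ c₂ c₃).2 ≤ 0 := by
  have hp₀ : 0 ≤ p * (p - 1) := by nlinarith
  constructor
  · rw [← sub_nonneg, zipConeComb_fst_sub_snd]
    exact add_nonneg (mul_nonneg h₁ (by linarith)) (mul_nonneg h₃ hp₀)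
  · rw [zipConeComb_mul_fst_add_snd, neg_nonpos]
    exact add_nonneg (mul_nonneg h₂ (by nlinarith)) (mul_nonneg h₃ hp₀)

lemma smul_eq_zipConeComb (p : ℤ) (a : ℤ × ℤ) :
    (p * p - 1) • a = zipConeComb p ((p - 1) * (a.1 - a.2)) (-(p * a.1 + a.2)) 0 := by
  ext <;> simp only [zipConeComb, Prod.fst_add, Prod.snd_add, Prod.smul_fst, Prod.smul_snd,
    Prod.smul_mk, smul_eq_mul] <;> ring

end

lemma le_and_mul_add_nonpos_of_smul {p m : ℤ} (hm : 0 < m) {a : ℤ × ℤ}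
    (h : (m • a).2 ≤ (m • a).1 ∧ p * (m • a).1 + (m • a).2 ≤ 0) :
    a.2 ≤ a.1 ∧ p * a.1 + a.2 ≤ 0 := by
  simp only [Prod.smul_fst, Prod.smul_snd, smul_eq_mul] at h
  constructor <;> nlinarith

lemma exists_natCast_smul_eq_zipConeComb {p : ℤ} (hp : 1 < p) {a : ℤ × ℤ}
    (h₁ : a.2 ≤ a.1) (h₂ : p * a.1 + a.2 ≤ 0) :
    ∃ m : ℕ, 0 < m ∧ ∃ c₁ c₂ : ℕ, (m : ℤ) • a = zipConeComb p c₁ c₂ 0 := by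
  have hm₀ : 0 < p * p - 1 := by nlinarith
  lift p * p - 1 to ℕ using hm₀.le with m hm
  lift (p - 1) * (a.1 - a.2) to ℕ using (by nlinarith) with c₁ hc₁
  lift -(p * a.1 + a.2) to ℕ using (by linarith) with c₂ hc₂
  exact ⟨m, by exact_mod_cast hm₀, c₁, c₂, by rw [hm, hc₁, hc₂, smul_eq_zipConeComb]⟩

/-- For `G = Sp(4)`, the saturation of the monoid
`ℕ·(1,−p) + ℕ·(1−p,1−p) + ℕ·(0,−p(p−1))` inside `ℤ²` (the zip cone `C_zip`) is exactly the
set of pairs `(a₁, a₂)` with `a₁ ≥ a₂` and `p·a₁ + a₂ ≤ 0`. -/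
theorem stmt_11 (p : ℕ) [Fact p.Prime] (a : ℤ × ℤ) :
    (∃ m : ℕ, 0 < m ∧ ∃ c₁ c₂ c₃ : ℕ,
        (m : ℤ) • a =
          (c₁ : ℤ) • ((1 : ℤ), -(p : ℤ)) +
          (c₂ : ℤ) • ((1 - (p : ℤ), 1 - (p : ℤ)) : ℤ × ℤ) +
          (c₃ : ℤ) • (((0 : ℤ), -((p : ℤ) * ((p : ℤ) - 1))) : ℤ × ℤ))
    ↔ (a.2 ≤ a.1 ∧ (p : ℤ) * a.1 + a.2 ≤ 0) := by
  have hp : 1 < (p : ℤ) := by exact_mod_cast (Fact.out : p.Prime).one_lt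
  constructor
  · rintro ⟨m, hm, c₁, c₂, c₃, h⟩
    refine le_and_mul_add_nonpos_of_smul (m := m) (by exact_mod_cast hm) ?_
    rw [show (m : ℤ) • a = zipConeComb p c₁ c₂ c₃ from h]
    exact zipConeComb_mem_cone hp.le (by positivity) (by positivity) (by positivity)
  · rintro ⟨h₁, h₂⟩
    obtain ⟨m, hm, c₁, c₂, h⟩ := exists_natCast_smul_eq_zipConeComb hp h₁ h₂
    exact ⟨m, hm, c₁, c₂, 0, by rw [h, zipConeComb, Nat.cast_zero]⟩
end

section
/- For G = Sp(6) (n = 3) and p prime, the cone in Z³ generated (after saturation) by η_1 = (p+1, −p², −p²), η_2 = (1, 1, −p(p+1)), η_ω = −(p−1,p−1,p−1), and S_1 = (1, 0, −p) is exactly the set of (a_1, a_2, a_3) ∈ Z³ satisfying: a_1 ≥ a_2 ≥ a_3, p²a_1 + p a_3 + a_2 ≤ 0, and p²a_2 + p a_1 + a_3 ≤ 0. -/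
/-!
The four inequalities are the facets of the cone: every generator satisfies them, and they are
preserved by sums, by nonnegative multiples and by dividing out a positive multiple, so the
saturated cone lies in the region. Conversely, the plane `P²a₁ + Pa₂ + a₃ = 0` cuts the region
into the simplicial cones spanned by `η₁, η₂, η_ω` and by `η₁, η₂, S₁`; inverting the two
generator matrices (of determinants `P³ - 1` and `P⁴ - P`) writes a multiple of any point of the
region as a nonnegative combination of generators.
-/

namespace Sp6Cone

variable (P : ℤ)

def η₁ : ℤ × ℤ × ℤ := (P + 1, -P ^ 2, -P ^ 2)

def η₂ : ℤ × ℤ × ℤ := (1, 1, -(P * (P + 1)))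

def ηω : ℤ × ℤ × ℤ := (-(P - 1), -(P - 1), -(P - 1))

def S₁ : ℤ × ℤ × ℤ := (1, 0, -P)

def SaturatedCone (a : ℤ × ℤ × ℤ) : Prop :=
  ∃ m : ℕ, 0 < m ∧ ∃ c₁ c₂ c₃ c₄ : ℕ,
    (m : ℤ) • a = (c₁ : ℤ) • η₁ P + (c₂ : ℤ) • η₂ P + (c₃ : ℤ) • ηω P + (c₄ : ℤ) • S₁ P

def facetCone : AddSubmonoid (ℤ × ℤ × ℤ) where
  carrier := {a | a.2.1 ≤ a.1 ∧ a.2.2 ≤ a.2.1 ∧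
    P ^ 2 * a.1 + P * a.2.2 + a.2.1 ≤ 0 ∧ P ^ 2 * a.2.1 + P * a.1 + a.2.2 ≤ 0}
  add_mem' := by
    rintro ⟨a₁, a₂, a₃⟩ ⟨b₁, b₂, b₃⟩ ⟨ha₀, ha₁, ha₂, ha₃⟩ ⟨hb₀, hb₁, hb₂, hb₃⟩
    simp only [Set.mem_ofPred_eq, Prod.mk_add_mk]
    refine ⟨?_, ?_, ?_, ?_⟩ <;> linarith
  zero_mem' := by simp

variable {P}

theorem mem_facetCone_iff {a : ℤ × ℤ × ℤ} :
    a ∈ facetCone P ↔ a.2.1 ≤ a.1 ∧ a.2.2 ≤ a.2.1 ∧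
      P ^ 2 * a.1 + P * a.2.2 + a.2.1 ≤ 0 ∧ P ^ 2 * a.2.1 + P * a.1 + a.2.2 ≤ 0 :=
  Iff.rfl

theorem η₁_mem_facetCone : η₁ P ∈ facetCone P := by
  simp only [mem_facetCone_iff, η₁]
  refine ⟨by nlinarith, by linarith, by linarith, ?_⟩
  nlinarith [Int.le_self_sq P, Int.le_self_sq (P ^ 2)]

theorem η₂_mem_facetCone (hP : 1 ≤ P) : η₂ P ∈ facetCone P := by
  simp only [mem_facetCone_iff, η₂]
  exact ⟨le_rfl, by nlinarith, by nlinarith, by linarith⟩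

theorem ηω_mem_facetCone (hP : 1 ≤ P) : ηω P ∈ facetCone P := by
  simp only [mem_facetCone_iff, ηω]
  exact ⟨le_rfl, le_rfl, by nlinarith, by nlinarith⟩

theorem S₁_mem_facetCone (hP : 0 ≤ P) : S₁ P ∈ facetCone P := by
  simp only [mem_facetCone_iff, S₁]
  exact ⟨by norm_num, by linarith, by linarith, by linarith⟩

theorem mem_facetCone_of_nsmul_mem {m : ℕ} (hm : 0 < m) {a : ℤ × ℤ × ℤ}
    (h : m • a ∈ facetCone P) : a ∈ facetCone P := by
  obtain ⟨a₁, a₂, a₃⟩ := a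
  have hm' : (0 : ℤ) < m := by exact_mod_cast hm
  simp only [mem_facetCone_iff, Prod.smul_mk, nsmul_eq_mul] at h ⊢
  obtain ⟨h₀, h₁, h₂, h₃⟩ := h
  refine ⟨?_, ?_, ?_, ?_⟩ <;> nlinarith

theorem cube_sub_one_smul_eq (a : ℤ × ℤ × ℤ) :
    (P ^ 3 - 1) • a = ((P - 1) * (a.1 - a.2.1)) • η₁ P + ((P - 1) * (a.2.1 - a.2.2)) • η₂ P
      + (-(P ^ 2 * a.1 + P * a.2.1 + a.2.2)) • ηω P := by
  obtain ⟨a₁, a₂, a₃⟩ := a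
  simp only [η₁, η₂, ηω, Prod.smul_mk, smul_eq_mul, Prod.mk_add_mk, Prod.mk.injEq]
  exact ⟨by ring, by ring, by ring⟩

theorem pow_four_sub_self_smul_eq (a : ℤ × ℤ × ℤ) :
    (P ^ 4 - P) • a = (-(P ^ 2 * a.2.1 + P * a.1 + a.2.2)) • η₁ P
      + (P * -(P ^ 2 * a.1 + P * a.2.2 + a.2.1)) • η₂ P
      + ((P ^ 2 + P + 1) * (P ^ 2 * a.1 + P * a.2.1 + a.2.2)) • S₁ P := by
  obtain ⟨a₁, a₂, a₃⟩ := a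
  simp only [η₁, η₂, S₁, Prod.smul_mk, smul_eq_mul, Prod.mk_add_mk, Prod.mk.injEq]
  exact ⟨by ring, by ring, by ring⟩

theorem saturatedCone_of_int_smul_eq {a : ℤ × ℤ × ℤ} {m c₁ c₂ c₃ c₄ : ℤ}
    (h : m • a = c₁ • η₁ P + c₂ • η₂ P + c₃ • ηω P + c₄ • S₁ P) (hm : 0 < m)
    (hc₁ : 0 ≤ c₁) (hc₂ : 0 ≤ c₂) (hc₃ : 0 ≤ c₃) (hc₄ : 0 ≤ c₄) : SaturatedCone P a := by
  lift m to ℕ using hm.le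
  lift c₁ to ℕ using hc₁
  lift c₂ to ℕ using hc₂
  lift c₃ to ℕ using hc₃
  lift c₄ to ℕ using hc₄
  exact ⟨m, by exact_mod_cast hm, c₁, c₂, c₃, c₄, h⟩

theorem facetCone_of_saturatedCone (hP : 1 ≤ P) {a : ℤ × ℤ × ℤ} (h : SaturatedCone P a) :
    a ∈ facetCone P := by
  obtain ⟨m, hm, c₁, c₂, c₃, c₄, h⟩ := h
  refine mem_facetCone_of_nsmul_mem hm ?_
  simp only [← natCast_zsmul, h]
  refine add_mem (add_mem (add_mem ?_ ?_) ?_) ?_ <;> refine AddSubmonoid.nsmul_mem _ ?_ _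
  exacts [η₁_mem_facetCone, η₂_mem_facetCone hP, ηω_mem_facetCone hP,
    S₁_mem_facetCone (by linarith)]

theorem saturatedCone_of_mem_facetCone (hP : 2 ≤ P) {a : ℤ × ℤ × ℤ} (h : a ∈ facetCone P) :
    SaturatedCone P a := by
  obtain ⟨h₀, h₁, h₂, h₃⟩ := mem_facetCone_iff.mp h
  by_cases hF : P ^ 2 * a.1 + P * a.2.1 + a.2.2 ≤ 0
  · have key := cube_sub_one_smul_eq (P := P) a
    rw [← add_zero (_ • ηω P), ← zero_smul ℤ (S₁ P), ← add_assoc] at key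
    exact saturatedCone_of_int_smul_eq key (by nlinarith) (mul_nonneg (by linarith) (by linarith))
      (mul_nonneg (by linarith) (by linarith)) (neg_nonneg.mpr hF) le_rfl
  · have key := pow_four_sub_self_smul_eq (P := P) a
    rw [← add_zero (_ • η₂ P), ← zero_smul ℤ (ηω P), ← add_assoc] at key
    exact saturatedCone_of_int_smul_eq key (by nlinarith) (neg_nonneg.mpr h₃)
      (mul_nonneg (by linarith) (neg_nonneg.mpr h₂)) le_rfl
      (mul_nonneg (by positivity) (by linarith))

theorem saturatedCone_iff (hP : 2 ≤ P) {a : ℤ × ℤ × ℤ} :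
    SaturatedCone P a ↔ a ∈ facetCone P :=
  ⟨facetCone_of_saturatedCone (by linarith), saturatedCone_of_mem_facetCone hP⟩

end Sp6Cone

/-- For `G = Sp(6)` and `p` prime, the saturated cone in `ℤ³` generated by
`η₁ = (p+1, −p², −p²)`, `η₂ = (1, 1, −p(p+1))`, `η_ω = −(p−1,p−1,p−1)` and `S₁ = (1,0,−p)`
is exactly the set of `(a₁,a₂,a₃)` with `a₁ ≥ a₂ ≥ a₃`, `p²a₁ + pa₃ + a₂ ≤ 0` and
`p²a₂ + pa₁ + a₃ ≤ 0`. -/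
theorem stmt_12 (p : ℕ) [Fact p.Prime] (a : ℤ × ℤ × ℤ) :
    (∃ m : ℕ, 0 < m ∧ ∃ c₁ c₂ c₃ c₄ : ℕ,
        (m : ℤ) • a =
          (c₁ : ℤ) • ((((p : ℤ) + 1, -(p : ℤ) ^ 2, -(p : ℤ) ^ 2)) : ℤ × ℤ × ℤ) +
          (c₂ : ℤ) • (((1, 1, -((p : ℤ) * ((p : ℤ) + 1)))) : ℤ × ℤ × ℤ) +
          (c₃ : ℤ) • (((-((p : ℤ) - 1), -((p : ℤ) - 1), -((p : ℤ) - 1))) : ℤ × ℤ × ℤ) +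
          (c₄ : ℤ) • (((1, 0, -(p : ℤ))) : ℤ × ℤ × ℤ))
    ↔ (a.2.1 ≤ a.1 ∧ a.2.2 ≤ a.2.1 ∧
        (p : ℤ) ^ 2 * a.1 + (p : ℤ) * a.2.2 + a.2.1 ≤ 0 ∧
        (p : ℤ) ^ 2 * a.2.1 + (p : ℤ) * a.1 + a.2.2 ≤ 0) :=
  Sp6Cone.saturatedCone_iff (by exact_mod_cast (Fact.out : p.Prime).two_le)
end

section
/- Let k be an algebraically closed field of characteristic p, let R = k[a_{11}, a_{12}, a_{21}, a_{22}] be the polynomial ring in the entries of a generic 2×2 matrix, and set Δ₁ = a_{12}, Δ₂ = a_{11}a_{22} − a_{12}a_{21}, α = a_{11}·a_{12}^{p−1} + a_{22}^p. Then the subring R_zip := k[Δ₁, Δ₂, α] of R satisfies: (a) α, Δ₁, Δ₂ are algebraically independent over k, so R_zip is a polynomial ring in 3 variables; (b) R_zip = R ∩ k[Δ₁, Δ₂, α][1/Δ₁] inside the fraction field of R; equivalently, the map k[Δ₁,Δ₂,α]/(Δ₁) → R/(Δ₁) is injective. -/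
/-!
Setting `a₁₁ = 0` and replacing `a₂₁` by `-a₂₁` sends `α, Δ₁, Δ₂` to the monomials
`a₂₂ ^ p, a₁₂, a₁₂ a₂₁`, whose exponent vectors are linearly independent, so `α, Δ₁, Δ₂` are
algebraically independent. Setting `a₁₂ = 0` kills `Δ₁` and sends `Δ₂, α` to the monomials
`a₁₁ a₂₂, a₂₂ ^ p`, again algebraically independent. Writing an element of `k[Δ₁, Δ₂, α]`
as `f(Δ₂, α) + Δ₁ z` with `z ∈ k[Δ₁, Δ₂, α]`, divisibility by `Δ₁` in `R` forces
`f(a₁₁ a₂₂, a₂₂ ^ p) = 0`, hence `f = 0`. Dividing by `Δ₁` repeatedly gives the saturation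
statement.
-/

open MvPolynomial

namespace Algebra

variable {R A : Type*} [CommSemiring R] [CommSemiring A] [Algebra R A]

theorem exists_add_mul_of_mem_adjoin_insert {t x : A} {s : Set A}
    (hx : x ∈ adjoin R (insert t s)) :
    ∃ a ∈ adjoin R s, ∃ z ∈ adjoin R (insert t s), x = a + t * z := by
  have hs : adjoin R s ≤ adjoin R (insert t s) := adjoin_mono (Set.subset_insert t s)
  have ht : t ∈ adjoin R (insert t s) := subset_adjoin (Set.mem_insert t s)
  induction hx using adjoin_induction with
  | mem x hx =>
    rcases hx with rfl | hx
    · exact ⟨0, zero_mem _, 1, one_mem _, by ring⟩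
    · exact ⟨x, subset_adjoin hx, 0, zero_mem _, by ring⟩
  | algebraMap r => exact ⟨_, algebraMap_mem _ r, 0, zero_mem _, by ring⟩
  | add x y _ _ hx hy =>
    obtain ⟨a, ha, z, hz, rfl⟩ := hx
    obtain ⟨b, hb, w, hw, rfl⟩ := hy
    exact ⟨a + b, add_mem ha hb, z + w, add_mem hz hw, by ring⟩
  | mul x y _ _ hx hy =>
    obtain ⟨a, ha, z, hz, rfl⟩ := hx
    obtain ⟨b, hb, w, hw, rfl⟩ := hy
    refine ⟨a * b, mul_mem ha hb, a * w + z * b + t * z * w, ?_, by ring⟩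
    exact add_mem (add_mem (mul_mem (hs ha) hw) (mul_mem hz (hs hb)))
      (mul_mem (mul_mem ht hz) hw)

end Algebra

theorem mem_of_pow_mul_mem {M : Type*} [MonoidWithZero M] [IsLeftCancelMulZero M] {S : Set M}
    {t : M} (ht : t ≠ 0) (hS : ∀ y ∈ S, t ∣ y → ∃ z ∈ S, y = t * z) {x : M} :
    ∀ {m : ℕ}, t ^ m * x ∈ S → x ∈ S
  | 0, h => by simpa using h
  | m + 1, h => by
    obtain ⟨z, hz, hxz⟩ := hS _ h ⟨t ^ m * x, by rw [pow_succ', mul_assoc]⟩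
    rw [pow_succ', mul_assoc] at hxz
    exact mem_of_pow_mul_mem ht hS (mul_left_cancel₀ ht hxz ▸ hz)

/-- Viewing `MvPolynomial τ R` as the monoid algebra of `τ →₀ ℕ`, evaluation at these monomials
is the map induced by the exponent map `e ↦ ∑ eᵢ • dᵢ`, which is injective. -/
theorem MvPolynomial.algebraicIndependent_monomial {R σ τ : Type*} [CommRing R]
    {d : σ → τ →₀ ℕ} (hd : LinearIndependent ℕ d) :
    AlgebraicIndependent R fun i => (monomial (d i) (1 : R) : MvPolynomial τ R) := by
  have h : (aeval fun i => (monomial (d i) (1 : R) : MvPolynomial τ R)) =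
      AddMonoidAlgebra.mapDomainAlgHom R R (Finsupp.linearCombination ℕ d).toAddMonoidHom := by
    refine MvPolynomial.algHom_ext fun i => ?_
    rw [aeval_X]
    refine .symm <|
      (AddMonoidAlgebra.mapDomain_single (f := Finsupp.linearCombination ℕ d)).trans ?_
    simp only [Finsupp.linearCombination_single, one_smul]
    rfl
  rw [algebraicIndependent_iff_injective_aeval, h]
  exact AddMonoidAlgebra.mapDomain_injective hd

section

variable {R A B ι : Type*} [CommRing R] [CommRing A] [CommRing B] [Algebra R A] [Algebra R B]
  {φ : A →ₐ[R] B} {w : ι → A}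

theorem AlgebraicIndependent.eq_zero_of_mem_adjoin_of_map_eq_zero
    (hw : AlgebraicIndependent R (φ ∘ w)) {a : A} (ha : a ∈ Algebra.adjoin R (Set.range w))
    (hφa : φ a = 0) : a = 0 := by
  rw [Algebra.adjoin_range_eq_range_aeval] at ha
  obtain ⟨P, rfl⟩ := ha
  have hP : aeval (φ ∘ w) P = 0 := (comp_aeval_apply w φ P).symm.trans hφa
  rw [hw.eq_zero_of_aeval_eq_zero P hP, map_zero]

theorem AlgebraicIndependent.exists_eq_mul_of_map_eq_zero
    (hw : AlgebraicIndependent R (φ ∘ w)) {t y : A} (ht : φ t = 0)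
    (hy : y ∈ Algebra.adjoin R (insert t (Set.range w))) (hφy : φ y = 0) :
    ∃ z ∈ Algebra.adjoin R (insert t (Set.range w)), y = t * z := by
  obtain ⟨a, ha, z, hz, rfl⟩ := Algebra.exists_add_mul_of_mem_adjoin_insert hy
  have hφa : φ a = 0 := by simpa [ht] using hφy
  exact ⟨z, hz, by rw [hw.eq_zero_of_mem_adjoin_of_map_eq_zero ha hφa, zero_add]⟩

end

section GenericMatrix

variable {k : Type*} [CommRing k] {p : ℕ}

theorem algebraicIndependent_X_pow_X_X_mul_X (hp : p ≠ 0) :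
    AlgebraicIndependent k
      ![(X (1, 1) ^ p : MvPolynomial (Fin 2 × Fin 2) k), X (0, 1), X (0, 1) * X (1, 0)] := by
  have hd : LinearIndependent ℕ ![Finsupp.single ((1 : Fin 2), (1 : Fin 2)) p,
      Finsupp.single (0, 1) 1, Finsupp.single (0, 1) 1 + Finsupp.single (1, 0) 1] := by
    refine Fintype.linearIndependent_iffₛ.mpr fun f g h => ?_
    have h0 : f 0 = g 0 := by simpa [Fin.sum_univ_three, hp] using DFunLike.congr_fun h (1, 1)
    have h12 : f 1 + f 2 = g 1 + g 2 := by
      simpa [Fin.sum_univ_three] using DFunLike.congr_fun h (0, 1)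
    have h2 : f 2 = g 2 := by simpa [Fin.sum_univ_three] using DFunLike.congr_fun h (1, 0)
    intro i
    fin_cases i
    exacts [h0, by simp only [Fin.mk_one]; omega, h2]
  convert algebraicIndependent_monomial (R := k) hd using 1
  funext i
  fin_cases i <;> simp [X, monomial_mul, monomial_pow]

theorem algebraicIndependent_X_mul_X_X_pow (hp : p ≠ 0) :
    AlgebraicIndependent k
      ![(X (0, 0) * X (1, 1) : MvPolynomial (Fin 2 × Fin 2) k), X (1, 1) ^ p] := by
  have hd : LinearIndependent ℕ ![Finsupp.single ((0 : Fin 2), (0 : Fin 2)) 1 +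
      Finsupp.single (1, 1) 1, Finsupp.single (1, 1) p] := by
    refine Fintype.linearIndependent_iffₛ.mpr fun f g h => ?_
    have h0 : f 0 = g 0 := by simpa using DFunLike.congr_fun h (0, 0)
    have h1 : f 1 = g 1 := by simpa [h0, hp] using DFunLike.congr_fun h (1, 1)
    intro i
    fin_cases i
    exacts [h0, h1]
  convert algebraicIndependent_monomial (R := k) hd using 1
  funext i
  fin_cases i <;> simp [X, monomial_mul, monomial_pow]

theorem algebraicIndependent_alpha_delta (hp : p ≠ 0) :
    AlgebraicIndependent k ![(X (0, 0) * X (0, 1) ^ (p - 1) + X (1, 1) ^ p :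
      MvPolynomial (Fin 2 × Fin 2) k), X (0, 1), X (0, 0) * X (1, 1) - X (0, 1) * X (1, 0)] := by
  refine .of_comp (aeval fun ij => ![![0, X (0, 1)], ![-X (1, 0), X (1, 1)]] ij.1 ij.2 :
    MvPolynomial (Fin 2 × Fin 2) k →ₐ[k] MvPolynomial (Fin 2 × Fin 2) k) ?_
  convert algebraicIndependent_X_pow_X_X_mul_X (k := k) hp using 1
  funext i
  fin_cases i <;> simp

theorem exists_eq_X_mul_of_mem_adjoin_of_X_dvd (hp : 2 ≤ p) {y : MvPolynomial (Fin 2 × Fin 2) k}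
    (hy : y ∈ Algebra.adjoin k {X (0, 1), X (0, 0) * X (1, 1) - X (0, 1) * X (1, 0),
      X (0, 0) * X (0, 1) ^ (p - 1) + X (1, 1) ^ p})
    (hdvd : X (0, 1) ∣ y) :
    ∃ z ∈ Algebra.adjoin k {X (0, 1), X (0, 0) * X (1, 1) - X (0, 1) * X (1, 0),
      X (0, 0) * X (0, 1) ^ (p - 1) + X (1, 1) ^ p}, y = X (0, 1) * z := by
  set φ : MvPolynomial (Fin 2 × Fin 2) k →ₐ[k] MvPolynomial (Fin 2 × Fin 2) k :=
    aeval fun ij => ![![X (0, 0), 0], ![X (1, 0), X (1, 1)]] ij.1 ij.2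
  have hw : AlgebraicIndependent k
      (φ ∘ ![X (0, 0) * X (1, 1) - X (0, 1) * X (1, 0),
        X (0, 0) * X (0, 1) ^ (p - 1) + X (1, 1) ^ p]) := by
    convert algebraicIndependent_X_mul_X_X_pow (k := k) (p := p) (by omega) using 1
    funext i
    fin_cases i <;> simp [φ, zero_pow (by omega : p - 1 ≠ 0)]
  rw [← Matrix.range_cons_cons_empty _ _ ![]] at hy ⊢
  obtain ⟨z, rfl⟩ := hdvd
  exact hw.exists_eq_mul_of_map_eq_zero (by simp [φ]) hy (by simp [φ])

end GenericMatrix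

theorem stmt_13_general (p : ℕ) [Fact p.Prime] (k : Type*) [Field k] :
    let R := MvPolynomial (Fin 2 × Fin 2) k
    let a : Fin 2 → Fin 2 → R := fun i j => MvPolynomial.X (i, j)
    let Δ₁ : R := a 0 1
    let Δ₂ : R := a 0 0 * a 1 1 - a 0 1 * a 1 0
    let α : R := a 0 0 * (a 0 1) ^ (p - 1) + (a 1 1) ^ p
    let Rzip : Subalgebra k R := Algebra.adjoin k {Δ₁, Δ₂, α}
    AlgebraicIndependent k ![α, Δ₁, Δ₂] ∧
    (∀ x : R, x ∈ Rzip ↔ ∃ m : ℕ, Δ₁ ^ m * x ∈ Rzip) ∧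
    (∀ y : R, y ∈ Rzip → (∃ z : R, y = Δ₁ * z) → ∃ z ∈ Rzip, y = Δ₁ * z) := by
  intro R a Δ₁ Δ₂ α Rzip
  have hp : 2 ≤ p := (Fact.out : p.Prime).two_le
  have hdvd : ∀ y ∈ (Rzip : Set R), Δ₁ ∣ y → ∃ z ∈ (Rzip : Set R), y = Δ₁ * z :=
    fun y => exists_eq_X_mul_of_mem_adjoin_of_X_dvd hp
  refine ⟨algebraicIndependent_alpha_delta (by omega), fun x => ?_, hdvd⟩
  exact ⟨fun hx => ⟨0, by simpa using hx⟩,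
    fun ⟨m, hm⟩ => mem_of_pow_mul_mem (X_ne_zero _) hdvd hm⟩

/-- Let `k` be algebraically closed of characteristic `p`,
`R = k[a₁₁,a₁₂,a₂₁,a₂₂]`, `Δ₁ = a₁₂`, `Δ₂ = a₁₁a₂₂ − a₁₂a₂₁`,
`α = a₁₁·a₁₂^{p−1} + a₂₂^p`, and `R_zip = k[Δ₁,Δ₂,α] ⊆ R`. Then:
(a) `α, Δ₁, Δ₂` are algebraically independent over `k` (so `R_zip` is a polynomial ring in
three variables); (b) `R_zip = R ∩ R_zip[1/Δ₁]` inside `Frac R`, i.e. an element of `R`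
some `Δ₁`-power multiple of which lies in `R_zip` already lies in `R_zip`; equivalently the
map `k[Δ₁,Δ₂,α]/(Δ₁) → R/(Δ₁)` is injective, i.e. an element of `R_zip` divisible by `Δ₁`
in `R` is divisible by `Δ₁` in `R_zip`. -/
theorem stmt_13 (p : ℕ) [Fact p.Prime] (k : Type*) [Field k] [IsAlgClosed k] [CharP k p] :
    let R := MvPolynomial (Fin 2 × Fin 2) k
    let a : Fin 2 → Fin 2 → R := fun i j => MvPolynomial.X (i, j)
    let Δ₁ : R := a 0 1
    let Δ₂ : R := a 0 0 * a 1 1 - a 0 1 * a 1 0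
    let α : R := a 0 0 * (a 0 1) ^ (p - 1) + (a 1 1) ^ p
    let Rzip : Subalgebra k R := Algebra.adjoin k {Δ₁, Δ₂, α}
    AlgebraicIndependent k ![α, Δ₁, Δ₂] ∧
    (∀ x : R, x ∈ Rzip ↔ ∃ m : ℕ, Δ₁ ^ m * x ∈ Rzip) ∧
    (∀ y : R, y ∈ Rzip → (∃ z : R, y = Δ₁ * z) → ∃ z ∈ Rzip, y = Δ₁ * z) :=
  stmt_13_general p k
end
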